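/- For every p ∈ [1,∞] there exists a constant C (depending on u⁰, G, H, T, d, p and κ) such that for all ε ∈ (0,1] and all measurable functions w, ς : D_T → ℝ with sup_{z ∈ D_T} |w(z)| ≤ ε^{−d/2} and ς ∈ L^p(D_T): ‖R_ε(w,ς)‖_{L^p(D_T)} ≤ C ε^κ (1 + ε^β ‖w‖_∞)³ (‖ς‖_{L^p(D_T)} + 1). -/

import Mathlib

/-!
On the compact domain `D_T` the function `u⁰` is bounded, say by `R`, and `|ε^{d/2} w| ≤ 1`, so
every Taylor argument `u⁰ + s ε^{d/2} w` stays in `[-(R+1), R+1]`, where `H''` and `G'''` are bounded.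
This gives `|R_ε(w,ς)| ≲ ε^{d/2} |w|² + ε^{3d/2-α} |w|³ |ς|`, and the choice of `α, β` makes
`ε^{d/2} ≤ ε^κ (ε^β)²` and `ε^{3d/2-α} = ε^κ (ε^β)³`, so both terms are at most
`ε^κ (1 + ε^β ‖w‖_∞)³ (1 + |ς|)`. Since `D_T` has finite measure, taking `L^p` norms finishes.
-/

open Real MeasureTheory ENNReal

/-- Space-time `ℝ × ℝ^d`. -/
abbrev SpaceTime (d : ℕ) := ℝ × EuclideanSpace ℝ (Fin d)

/-- The space-time domain `D_T = [0,T] × [0,1]^d`. -/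
def domDT (d : ℕ) (T : ℝ) : Set (SpaceTime d) :=
  Set.Icc 0 T ×ˢ {x : EuclideanSpace ℝ (Fin d) | ∀ i, x i ∈ Set.Icc (0 : ℝ) 1}

/-- The remainder
`R_ε(w,ς)(z) = ε^{d/2} w(z)² ∫₀¹ H''(u⁰(z)+sε^{d/2}w(z))(1-s) ds
  + (ε^{3d/2-α}/2) w(z)³ (∫₀¹ G'''(u⁰(z)+sε^{d/2}w(z))(1-s)² ds) ς(z)`. -/
noncomputable def remR (d : ℕ) (u0 : SpaceTime d → ℝ) (H G : ℝ → ℝ) (a : ℝ)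
    (ε : ℝ) (w ς : SpaceTime d → ℝ) (z : SpaceTime d) : ℝ :=
  ε ^ ((d : ℝ) / 2) * (w z) ^ 2 *
      (∫ s in (0 : ℝ)..1, iteratedDeriv 2 H (u0 z + s * ε ^ ((d : ℝ) / 2) * w z) * (1 - s))
    + ε ^ (3 * (d : ℝ) / 2 - a) / 2 * (w z) ^ 3 *
        (∫ s in (0 : ℝ)..1,
          iteratedDeriv 3 G (u0 z + s * ε ^ ((d : ℝ) / 2) * w z) * (1 - s) ^ 2) * ς z

lemma isCompact_domDT (d : ℕ) (T : ℝ) : IsCompact (domDT d T) := by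
  refine isCompact_Icc.prod ?_
  have hcube : {x : EuclideanSpace ℝ (Fin d) | ∀ i, x i ∈ Set.Icc (0 : ℝ) 1}
      = (EuclideanSpace.equiv (Fin d) ℝ).toHomeomorph ⁻¹' Set.Icc 0 1 := by
    ext x
    simp [Pi.le_def, forall_and]
  exact hcube ▸ (EuclideanSpace.equiv (Fin d) ℝ).toHomeomorph.isCompact_preimage.2 isCompact_Icc

lemma remR_exponents {d : ℕ} {κ a b : ℝ} (hκ : κ ≤ 1)
    (hab : (d = 2 ∧ a = 9 / 4 ∧ b = 1 / 4 - κ / 3) ∨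
           (d = 3 ∧ a = 11 / 4 ∧ b = 7 / 12 - κ / 3)) :
    κ + 2 * b ≤ (d : ℝ) / 2 ∧ 3 * (d : ℝ) / 2 - a = κ + 3 * b := by
  rcases hab with ⟨rfl, rfl, rfl⟩ | ⟨rfl, rfl, rfl⟩ <;> constructor <;> push_cast <;> linarith

lemma abs_integral_mul_one_sub_pow_le {f : ℝ → ℝ} {M : ℝ} (k : ℕ)
    (hf : ∀ s ∈ Set.Ioc (0 : ℝ) 1, |f s| ≤ M) :
    |∫ s in (0 : ℝ)..1, f s * (1 - s) ^ k| ≤ M := by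
  have hbound (s : ℝ) (hs : s ∈ Set.uIoc 0 1) : ‖f s * (1 - s) ^ k‖ ≤ M := by
    rw [Set.uIoc_of_le zero_le_one] at hs
    have h1s : |1 - s| ≤ 1 := abs_le.2 ⟨by linarith [hs.2], by linarith [hs.1]⟩
    rw [norm_mul, norm_pow, norm_eq_abs, norm_eq_abs]
    exact (mul_le_of_le_one_right (abs_nonneg _) (pow_le_one₀ (abs_nonneg _) h1s)).trans (hf s hs)
  simpa using intervalIntegral.norm_integral_le_of_norm_le_const hbound

lemma rpow_mul_pow_le_rpow_mul_one_add_pow {ε γ κ b S : ℝ} {k n : ℕ} (hε₀ : 0 < ε)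
    (hε₁ : ε ≤ 1) (hS : 0 ≤ S) (hkn : k ≤ n) (hγ : κ + k * b ≤ γ) :
    ε ^ γ * S ^ k ≤ ε ^ κ * (1 + ε ^ b * S) ^ n := by
  have ht : 0 ≤ ε ^ b * S := by positivity
  calc ε ^ γ * S ^ k ≤ ε ^ (κ + k * b) * S ^ k := by
        gcongr ?_ * _
        exact rpow_le_rpow_of_exponent_ge hε₀ hε₁ hγ
    _ = ε ^ κ * (ε ^ b * S) ^ k := by
        rw [rpow_add hε₀, mul_comm (k : ℝ) b, rpow_mul_natCast hε₀.le, mul_pow, mul_assoc]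
    _ ≤ ε ^ κ * (1 + ε ^ b * S) ^ n := by
        gcongr
        calc (ε ^ b * S) ^ k ≤ (1 + ε ^ b * S) ^ k := by gcongr; linarith
          _ ≤ (1 + ε ^ b * S) ^ n := pow_le_pow_right₀ (by linarith) hkn

lemma abs_remR_le {d : ℕ} {u0 : SpaceTime d → ℝ} {H G : ℝ → ℝ} {a ε MH MG : ℝ}
    {w ς : SpaceTime d → ℝ} {z : SpaceTime d} (hε : 0 ≤ ε)
    (hH : ∀ s ∈ Set.Ioc (0 : ℝ) 1,
      |iteratedDeriv 2 H (u0 z + s * ε ^ ((d : ℝ) / 2) * w z)| ≤ MH)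
    (hG : ∀ s ∈ Set.Ioc (0 : ℝ) 1,
      |iteratedDeriv 3 G (u0 z + s * ε ^ ((d : ℝ) / 2) * w z)| ≤ MG) :
    |remR d u0 H G a ε w ς z| ≤ ε ^ ((d : ℝ) / 2) * |w z| ^ 2 * MH
      + ε ^ (3 * (d : ℝ) / 2 - a) / 2 * |w z| ^ 3 * MG * |ς z| := by
  have hIH := abs_integral_mul_one_sub_pow_le 1 hH
  have hIG := abs_integral_mul_one_sub_pow_le 2 hG
  simp only [pow_one] at hIH
  unfold remR
  refine (abs_add_le _ _).trans (add_le_add ?_ ?_)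
  · rw [abs_mul, abs_mul, abs_of_nonneg (by positivity : 0 ≤ ε ^ ((d : ℝ) / 2)), abs_pow]
    gcongr
  · rw [abs_mul, abs_mul, abs_mul, abs_div, abs_of_nonneg (by positivity :
      0 ≤ ε ^ (3 * (d : ℝ) / 2 - a)), abs_two, abs_pow]
    gcongr

lemma add_mul_mul_mem_Icc {x y e s R : ℝ} (hx : |x| ≤ R) (hs : s ∈ Set.Ioc (0 : ℝ) 1)
    (he : 0 ≤ e) (hey : e * |y| ≤ 1) : x + s * e * y ∈ Set.Icc (-(R + 1)) (R + 1) := by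
  have hsey : |s * e * y| ≤ 1 := by
    rw [abs_mul, abs_mul, abs_of_pos hs.1, abs_of_nonneg he, mul_assoc]
    nlinarith [hs.2, mul_nonneg he (abs_nonneg y)]
  rw [abs_le] at hx hsey
  constructor <;> linarith [hx.1, hx.2, hsey.1, hsey.2]

lemma abs_remR_le_of_bounds {d : ℕ} {u0 : SpaceTime d → ℝ} {H G : ℝ → ℝ}
    {a b κ ε R S MH MG : ℝ} {w ς : SpaceTime d → ℝ} {z : SpaceTime d}
    (hε : ε ∈ Set.Ioc (0 : ℝ) 1) (hE₂ : κ + 2 * b ≤ (d : ℝ) / 2)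
    (hE₃ : 3 * (d : ℝ) / 2 - a = κ + 3 * b) (hu : |u0 z| ≤ R)
    (hwε : |w z| ≤ ε ^ (-(d : ℝ) / 2)) (hwS : |w z| ≤ S)
    (hMH : ∀ x ∈ Set.Icc (-(R + 1)) (R + 1), ‖iteratedDeriv 2 H x‖ ≤ MH)
    (hMG : ∀ x ∈ Set.Icc (-(R + 1)) (R + 1), ‖iteratedDeriv 3 G x‖ ≤ MG) :
    |remR d u0 H G a ε w ς z|
      ≤ max MH (MG / 2) * ε ^ κ * (1 + ε ^ b * S) ^ 3 * (1 + |ς z|) := by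
  obtain ⟨hε₀, hε₁⟩ := hε
  have hscale : ε ^ ((d : ℝ) / 2) * |w z| ≤ 1 := by
    calc ε ^ ((d : ℝ) / 2) * |w z| ≤ ε ^ ((d : ℝ) / 2) * ε ^ (-(d : ℝ) / 2) := by gcongr
      _ = 1 := by rw [← rpow_add hε₀, neg_div, add_neg_cancel, Real.rpow_zero]
  have harg : ∀ s ∈ Set.Ioc (0 : ℝ) 1,
      u0 z + s * ε ^ ((d : ℝ) / 2) * w z ∈ Set.Icc (-(R + 1)) (R + 1) :=
    fun s hs => add_mul_mul_mem_Icc hu hs (by positivity) hscale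
  have hMH₀ : 0 ≤ MH := (norm_nonneg _).trans (hMH _ (harg 1 ⟨one_pos, le_rfl⟩))
  have hMG₀ : 0 ≤ MG := (norm_nonneg _).trans (hMG _ (harg 1 ⟨one_pos, le_rfl⟩))
  have hS : 0 ≤ S := (abs_nonneg _).trans hwS
  set P := ε ^ κ * (1 + ε ^ b * S) ^ 3
  have hP : 0 ≤ P := by positivity
  have hP₂ : ε ^ ((d : ℝ) / 2) * S ^ 2 ≤ P :=
    rpow_mul_pow_le_rpow_mul_one_add_pow hε₀ hε₁ hS (by norm_num) (by push_cast; linarith)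
  have hP₃ : ε ^ (3 * (d : ℝ) / 2 - a) * S ^ 3 ≤ P :=
    rpow_mul_pow_le_rpow_mul_one_add_pow hε₀ hε₁ hS le_rfl (by push_cast; linarith)
  calc |remR d u0 H G a ε w ς z|
      ≤ ε ^ ((d : ℝ) / 2) * |w z| ^ 2 * MH
        + ε ^ (3 * (d : ℝ) / 2 - a) / 2 * |w z| ^ 3 * MG * |ς z| :=
        abs_remR_le hε₀.le (fun s hs => hMH _ (harg s hs)) (fun s hs => hMG _ (harg s hs))
    _ ≤ ε ^ ((d : ℝ) / 2) * S ^ 2 * MH + ε ^ (3 * (d : ℝ) / 2 - a) / 2 * S ^ 3 * MG * |ς z| := by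
        gcongr
    _ ≤ P * MH + P * (MG / 2) * |ς z| := by
        linarith [mul_le_mul_of_nonneg_right hP₂ hMH₀,
          mul_le_mul_of_nonneg_right hP₃ (by positivity : 0 ≤ MG / 2 * |ς z|)]
    _ ≤ max MH (MG / 2) * P * (1 + |ς z|) := by
        linarith [mul_le_mul_of_nonneg_left (le_max_left MH (MG / 2)) hP,
          mul_le_mul_of_nonneg_left (le_max_right MH (MG / 2)) (mul_nonneg hP (abs_nonneg (ς z)))]
    _ = max MH (MG / 2) * ε ^ κ * (1 + ε ^ b * S) ^ 3 * (1 + |ς z|) := by simp only [P, mul_assoc]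

lemma eLpNorm_le_of_norm_le_mul_one_add {α E F : Type*} [MeasurableSpace α] {μ : Measure α}
    [IsFiniteMeasure μ] [NormedAddCommGroup E] [NormedAddCommGroup F] {p : ℝ≥0∞} (hp : 1 ≤ p)
    {f : α → E} {g : α → F} {c : ℝ} (hg : AEStronglyMeasurable g μ)
    (hfg : ∀ᵐ x ∂μ, ‖f x‖ ≤ c * (1 + ‖g x‖)) :
    eLpNorm f p μ ≤ ENNReal.ofReal (c * ((eLpNorm (fun _ ↦ (1 : ℝ)) p μ).toReal + 1))
      * (eLpNorm g p μ + 1) := by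
  rcases lt_or_ge c 0 with hc | hc
  · have hμ : μ = 0 := ae_eq_bot.1 <| Filter.eventually_false_iff_eq_bot.1 <|
      hfg.mono fun x hx => by nlinarith [norm_nonneg (f x), norm_nonneg (g x)]
    simp [hμ]
  set A := eLpNorm (fun _ ↦ (1 : ℝ)) p μ
  have hA : A ≠ ⊤ := (memLp_const 1).eLpNorm_lt_top.ne
  calc eLpNorm f p μ ≤ eLpNorm (c • ((fun _ ↦ (1 : ℝ)) + fun x ↦ ‖g x‖)) p μ :=
        eLpNorm_mono_ae_real hfg
    _ ≤ ENNReal.ofReal c * (A + eLpNorm g p μ) := by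
        grw [eLpNorm_const_smul_le, eLpNorm_add_le aestronglyMeasurable_const hg.norm hp,
          eLpNorm_norm, Real.enorm_eq_ofReal hc]
    _ ≤ ENNReal.ofReal c * ((A + 1) * (eLpNorm g p μ + 1)) := by
        gcongr
        calc A + eLpNorm g p μ ≤ A * eLpNorm g p μ + (A + eLpNorm g p μ + 1) :=
              le_self_add.trans le_add_self
          _ = (A + 1) * (eLpNorm g p μ + 1) := by ring
    _ = _ := by
        rw [ENNReal.ofReal_mul hc, ENNReal.ofReal_add toReal_nonneg zero_le_one,
          ofReal_toReal hA, ofReal_one, mul_assoc]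

theorem stmt18_general (d : ℕ) (T : ℝ)
    (u0 : SpaceTime d → ℝ) (hu0 : Continuous u0)
    (H G : ℝ → ℝ) (hH : ContDiff ℝ 4 H) (hG : ContDiff ℝ 5 G)
    (κ : ℝ) (hκ : κ ∈ Set.Ioo (0 : ℝ) (1 / 4)) (a b : ℝ)
    (hab : (d = 2 ∧ a = 9 / 4 ∧ b = 1 / 4 - κ / 3) ∨
           (d = 3 ∧ a = 11 / 4 ∧ b = 7 / 12 - κ / 3))
    (p : ℝ≥0∞) (hp : 1 ≤ p) :
    ∃ C : ℝ, ∀ ε ∈ Set.Ioc (0 : ℝ) 1, ∀ w ς : SpaceTime d → ℝ,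
      Measurable w → Measurable ς →
      (∀ z ∈ domDT d T, |w z| ≤ ε ^ (-(d : ℝ) / 2)) →
      MemLp ς p (volume.restrict (domDT d T)) →
      eLpNorm (remR d u0 H G a ε w ς) p (volume.restrict (domDT d T))
        ≤ ENNReal.ofReal
            (C * ε ^ κ * (1 + ε ^ b * ⨆ z : domDT d T, |w z.1|) ^ 3) *
          (eLpNorm ς p (volume.restrict (domDT d T)) + 1) := by
  obtain ⟨hE₂, hE₃⟩ := remR_exponents (by linarith [hκ.2]) hab
  have hD := isCompact_domDT d T
  have : IsFiniteMeasure (volume.restrict (domDT d T)) :=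
    isFiniteMeasure_restrict.2 hD.measure_lt_top.ne
  obtain ⟨R, hR⟩ := hD.exists_bound_of_continuousOn hu0.continuousOn
  obtain ⟨MH, hMH⟩ := (isCompact_Icc (a := -(R + 1)) (b := R + 1)).exists_bound_of_continuousOn
    (hH.continuous_iteratedDeriv 2 (by norm_num)).continuousOn
  obtain ⟨MG, hMG⟩ := (isCompact_Icc (a := -(R + 1)) (b := R + 1)).exists_bound_of_continuousOn
    (hG.continuous_iteratedDeriv 3 (by norm_num)).continuousOn
  refine ⟨max MH (MG / 2) *
    ((eLpNorm (fun _ ↦ (1 : ℝ)) p (volume.restrict (domDT d T))).toReal + 1), ?_⟩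
  intro ε hε w ς _ _ hwε hς
  have hwS (z) (hz : z ∈ domDT d T) : |w z| ≤ ⨆ z : domDT d T, |w z.1| :=
    le_ciSup (f := fun z : domDT d T ↦ |w z.1|)
      ⟨_, Set.forall_mem_range.2 fun z ↦ hwε z.1 z.2⟩ ⟨z, hz⟩
  refine (eLpNorm_le_of_norm_le_mul_one_add hp hς.aestronglyMeasurable
    (ae_restrict_of_forall_mem hD.isClosed.measurableSet fun z hz ↦
      abs_remR_le_of_bounds hε hE₂ hE₃ (hR z hz) (hwε z hz) (hwS z hz) hMH hMG)).trans_eq ?_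
  congr 2
  ring

theorem stmt18 (d : ℕ) (hd : d = 2 ∨ d = 3) (T : ℝ) (hT : 0 < T)
    (u0 : SpaceTime d → ℝ) (hu0 : Continuous u0)
    (H G : ℝ → ℝ) (hH : ContDiff ℝ 4 H) (hG : ContDiff ℝ 5 G)
    (κ : ℝ) (hκ : κ ∈ Set.Ioo (0 : ℝ) (1 / 4)) (a b : ℝ)
    (hab : (d = 2 ∧ a = 9 / 4 ∧ b = 1 / 4 - κ / 3) ∨
           (d = 3 ∧ a = 11 / 4 ∧ b = 7 / 12 - κ / 3))
    (p : ℝ≥0∞) (hp : 1 ≤ p) :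
    ∃ C : ℝ, ∀ ε ∈ Set.Ioc (0 : ℝ) 1, ∀ w ς : SpaceTime d → ℝ,
      Measurable w → Measurable ς →
      (∀ z ∈ domDT d T, |w z| ≤ ε ^ (-(d : ℝ) / 2)) →
      MemLp ς p (volume.restrict (domDT d T)) →
      eLpNorm (remR d u0 H G a ε w ς) p (volume.restrict (domDT d T))
        ≤ ENNReal.ofReal
            (C * ε ^ κ * (1 + ε ^ b * ⨆ z : domDT d T, |w z.1|) ^ 3) *
          (eLpNorm ς p (volume.restrict (domDT d T)) + 1) :=
  stmt18_general d T u0 hu0 H G hH hG κ hκ a b hab p hp
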